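/- Let 𝔥 : ℝ² → ℝ be continuous, positively 1-homogeneous, with 𝔥(ν) > 0 for ν ≠ 0, continuously differentiable on ℝ² \ {0}, and strictly convex in the sense that 𝔥(tν + (1−t)μ) < t·𝔥(ν) + (1−t)·𝔥(μ) for every t ∈ (0,1) and all vectors ν, μ which are not positively parallel. Then for every unit vector η ∈ 𝕊¹ the set {P ∈ ℝ² : 𝔥(P) = 1 and ⟨∇𝔥(P), η⟩ = 0} consists of exactly two points. -/

import Mathlib

/-!
Write `S = {h = 1}`. At `P ∈ S`, Euler's identity gives `⟪∇h P, P⟫ = h P = 1` and the tangent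
inequality of the convex function `h` gives `⟪∇h P, y⟫ ≤ h y`, so `P` maximises `⟪∇h P, ·⟫` on `S`.
Conversely, if `P` maximises `⟪σ, ·⟫` on `S`, then by homogeneity `h` is minimal at `P` on the
hyperplane `P + σᗮ`, so `∇h P` is a multiple of `σ`. Strict convexity makes the maximiser of
`⟪σ, ·⟫` on the compact set `S` unique. Hence the points of `S` where `∇h` is parallel to `σ ≠ 0`
are exactly the maximisers of `⟪σ, ·⟫` and of `⟪-σ, ·⟫`; in the plane, `∇h P ⊥ η` means that
`∇h P` is parallel to the rotated vector `Jη`.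
-/

open RealInnerProductSpace Set

section VectorSpace

variable {E : Type*} [AddCommGroup E] [Module ℝ E] {h : E → ℝ}

def IsPosHomogeneous (h : E → ℝ) : Prop :=
  ∀ c : ℝ, 0 ≤ c → ∀ v, h (c • v) = c * h v

def PosParallel (ν μ : E) : Prop :=
  (∃ l : ℝ, 0 ≤ l ∧ ν = l • μ) ∨ (∃ l : ℝ, 0 ≤ l ∧ μ = l • ν)

def StrictConvexOffRays (h : E → ℝ) : Prop :=
  ∀ t ∈ Ioo (0 : ℝ) 1, ∀ ν μ : E, ¬ PosParallel ν μ →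
    h (t • ν + (1 - t) • μ) < t * h ν + (1 - t) * h μ

namespace IsPosHomogeneous

theorem map_zero (hh : IsPosHomogeneous h) : h 0 = 0 := by
  simpa using hh 0 le_rfl 0

theorem ne_zero_of_eq_one (hh : IsPosHomogeneous h) {x : E} (hx : h x = 1) : x ≠ 0 := by
  rintro rfl
  simp [hh.map_zero] at hx

theorem apply_inv_smul_self (hh : IsPosHomogeneous h) {v : E} (hv : 0 < h v) :
    h ((h v)⁻¹ • v) = 1 := by
  rw [hh _ (inv_nonneg.2 hv.le), inv_mul_cancel₀ hv.ne']

theorem eq_of_posParallel (hh : IsPosHomogeneous h) {x y : E} (hx : h x = 1) (hy : h y = 1)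
    (hxy : PosParallel x y) : x = y := by
  obtain ⟨l, hl, rfl⟩ | ⟨l, hl, rfl⟩ := hxy
  · rw [hh l hl y, hy, mul_one] at hx
    rw [hx, one_smul]
  · rw [hh l hl x, hx, mul_one] at hy
    rw [hy, one_smul]

theorem convexOn_univ (hh : IsPosHomogeneous h) (hs : StrictConvexOffRays h) :
    ConvexOn ℝ univ h := by
  refine ⟨convex_univ, fun x _ y _ a b ha hb hab => ?_⟩
  obtain rfl : b = 1 - a := by linarith
  rcases ha.eq_or_lt with rfl | ha
  · simp
  rcases hb.eq_or_lt with hb | hb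
  · obtain rfl : a = 1 := by linarith
    simp
  by_cases hxy : PosParallel x y
  · -- on a ray `h` is linear
    obtain ⟨l, hl, rfl⟩ | ⟨l, hl, rfl⟩ := hxy
    · rw [smul_smul, ← add_smul, hh _ (by positivity), hh l hl]
      exact le_of_eq (by simp only [smul_eq_mul]; ring)
    · rw [smul_smul, ← add_smul, hh _ (by positivity), hh l hl]
      exact le_of_eq (by simp only [smul_eq_mul]; ring)
  · exact (hs a ⟨ha, by linarith⟩ x y hxy).le

end IsPosHomogeneous

end VectorSpace

section NormedSpace

variable {E : Type*} [NormedAddCommGroup E] [NormedSpace ℝ E]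

theorem ConvexOn.add_fderiv_sub_le {f : E → ℝ} {f' : E →L[ℝ] ℝ} {x : E}
    (hf : ConvexOn ℝ univ f) (hfx : HasFDerivAt f f' x) (y : E) :
    f x + f' (y - x) ≤ f y := by
  let ℓ : ℝ →ᵃ[ℝ] E := AffineMap.lineMap x y
  have hline : HasDerivAt (f ∘ ℓ) (f' (y - x)) 0 :=
    hfx.comp_hasDerivAt_of_eq 0 AffineMap.hasDerivAt_lineMap (by simp [ℓ])
  have := (hf.comp_affineMap ℓ).le_slope_of_hasDerivAt
    (mem_univ 0) (mem_univ 1) zero_lt_one hline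
  simp only [slope, Function.comp_apply, ℓ, AffineMap.lineMap_apply_zero,
    AffineMap.lineMap_apply_one, sub_zero, inv_one, one_smul, vsub_eq_sub] at this
  linarith

theorem IsPosHomogeneous.apply_of_hasFDerivAt {h : E → ℝ} (hh : IsPosHomogeneous h)
    {f' : E →L[ℝ] ℝ} {x : E} (hf : HasFDerivAt h f' x) : f' x = h x := by
  have hray : HasDerivAt (fun t : ℝ => h (t • x)) (f' x) 1 :=
    hf.comp_hasDerivAt_of_eq 1 (by simpa using (hasDerivAt_id (1 : ℝ)).smul_const x) (by simp)
  have hlin : (fun t : ℝ => h (t • x)) =ᶠ[nhds 1] fun t => t * h x := by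
    filter_upwards [Ioi_mem_nhds one_pos] with t ht using hh t (le_of_lt ht) x
  exact (hlin.hasDerivAt_iff.1 hray).unique
    (by simpa using (hasDerivAt_id (1 : ℝ)).mul_const (h x))

end NormedSpace

section LevelSet

variable {E : Type*} [NormedAddCommGroup E] [InnerProductSpace ℝ E] {h : E → ℝ}

namespace IsPosHomogeneous

theorem inner_pos_of_isMaxOn (hh : IsPosHomogeneous h) (hpos : ∀ v, v ≠ 0 → 0 < h v)
    {σ x : E} (hσ : σ ≠ 0) (hmax : IsMaxOn (fun y => ⟪σ, y⟫) {y | h y = 1} x) :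
    0 < ⟪σ, x⟫ := by
  have hle : ⟪σ, (h σ)⁻¹ • σ⟫ ≤ ⟪σ, x⟫ := hmax (hh.apply_inv_smul_self (hpos σ hσ))
  rw [real_inner_smul_right, real_inner_self_eq_norm_sq] at hle
  have := hpos σ hσ
  have := norm_pos_iff.2 hσ
  exact lt_of_lt_of_le (by positivity) hle

theorem one_le_of_isMaxOn_inner (hh : IsPosHomogeneous h) (hpos : ∀ v, v ≠ 0 → 0 < h v)
    {σ x w : E} (hσ : σ ≠ 0) (hmax : IsMaxOn (fun y => ⟪σ, y⟫) {y | h y = 1} x)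
    (hw : ⟪σ, w⟫ = ⟪σ, x⟫) : 1 ≤ h w := by
  have hM := hh.inner_pos_of_isMaxOn hpos hσ hmax
  have hwpos : 0 < h w := hpos w <| by
    rintro rfl
    rw [inner_zero_right] at hw
    linarith
  have hle : ⟪σ, (h w)⁻¹ • w⟫ ≤ ⟪σ, x⟫ := hmax (hh.apply_inv_smul_self hwpos)
  rw [real_inner_smul_right, hw, mul_le_iff_le_one_left hM] at hle
  exact (inv_le_one₀ hwpos).1 hle

theorem eq_of_isMaxOn_inner (hh : IsPosHomogeneous h) (hpos : ∀ v, v ≠ 0 → 0 < h v)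
    (hs : StrictConvexOffRays h) {σ x y : E} (hσ : σ ≠ 0) (hx : h x = 1) (hy : h y = 1)
    (hmx : IsMaxOn (fun z => ⟪σ, z⟫) {z | h z = 1} x)
    (hmy : IsMaxOn (fun z => ⟪σ, z⟫) {z | h z = 1} y) : x = y := by
  by_contra hne
  have hxy : ⟪σ, y⟫ = ⟪σ, x⟫ := le_antisymm (hmx hy) (hmy hx)
  set z : E := (1 / 2 : ℝ) • x + (1 - 1 / 2 : ℝ) • y
  have hz : h z < 1 := by
    have := hs (1 / 2) (by norm_num) x y (mt (hh.eq_of_posParallel hx hy) hne)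
    rwa [hx, hy, show (1 / 2 * 1 + (1 - 1 / 2) * 1 : ℝ) = 1 by norm_num] at this
  have hσz : ⟪σ, z⟫ = ⟪σ, x⟫ := by
    simp only [z, inner_add_right, real_inner_smul_right, hxy]
    ring
  exact hz.not_ge (hh.one_le_of_isMaxOn_inner hpos hσ hmx hσz)

theorem isCompact_levelSet [FiniteDimensional ℝ E] (hh : IsPosHomogeneous h)
    (hcont : Continuous h) (hpos : ∀ v, v ≠ 0 → 0 < h v) : IsCompact {x | h x = 1} := by
  have hnorm : ContinuousOn (fun v : E => (h v)⁻¹ • v) (Metric.sphere 0 1) :=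
    (hcont.continuousOn.inv₀ fun v hv => (hpos v (ne_zero_of_mem_unit_sphere ⟨v, hv⟩)).ne').smul
      continuousOn_id
  refine ((isCompact_sphere 0 1).image_of_continuousOn hnorm).of_isClosed_subset
    (isClosed_eq hcont continuous_const) fun x hx => ?_
  have hx0 := norm_pos_iff.2 (hh.ne_zero_of_eq_one hx)
  refine ⟨‖x‖⁻¹ • x, by simp [norm_smul, hx0.ne'], ?_⟩
  dsimp only
  rw [hh _ (inv_nonneg.2 hx0.le), show h x = 1 from hx, mul_one, inv_inv, smul_smul,
    mul_inv_cancel₀ hx0.ne', one_smul]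

theorem exists_isMaxOn_inner [FiniteDimensional ℝ E] (hh : IsPosHomogeneous h)
    (hcont : Continuous h) (hpos : ∀ v, v ≠ 0 → 0 < h v) {σ : E} (hσ : σ ≠ 0) :
    ∃ x, h x = 1 ∧ IsMaxOn (fun y => ⟪σ, y⟫) {y | h y = 1} x :=
  (hh.isCompact_levelSet hcont hpos).exists_isMaxOn ⟨_, hh.apply_inv_smul_self (hpos σ hσ)⟩
    (continuous_const.inner continuous_id).continuousOn

theorem hasFDerivAt_eq_zero_of_isMaxOn_inner (hh : IsPosHomogeneous h)
    (hpos : ∀ v, v ≠ 0 → 0 < h v) {σ x v : E} {f' : E →L[ℝ] ℝ} (hσ : σ ≠ 0) (hx : h x = 1)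
    (hmax : IsMaxOn (fun y => ⟪σ, y⟫) {y | h y = 1} x) (hf : HasFDerivAt h f' x)
    (hv : ⟪σ, v⟫ = 0) : f' v = 0 := by
  have hmin : IsLocalMin (fun t : ℝ => h (x + t • v)) 0 := by
    refine Filter.Eventually.of_forall fun t => ?_
    show h (x + (0 : ℝ) • v) ≤ h (x + t • v)
    rw [zero_smul, add_zero, hx]
    refine hh.one_le_of_isMaxOn_inner hpos hσ hmax ?_
    rw [inner_add_right, real_inner_smul_right, hv, mul_zero, add_zero]
  have hline : HasDerivAt (fun t : ℝ => h (x + t • v)) (f' v) 0 :=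
    hf.comp_hasDerivAt_of_eq 0 (by simpa using ((hasDerivAt_id (0 : ℝ)).smul_const v).const_add x)
      (by simp)
  exact hmin.hasDerivAt_eq_zero hline

theorem inner_self_of_hasGradientAt [CompleteSpace E] (hh : IsPosHomogeneous h)
    {x g : E} (hg : HasGradientAt h g x) : ⟪g, x⟫ = h x :=
  hh.apply_of_hasFDerivAt (hasGradientAt_iff_hasFDerivAt.1 hg)

theorem isMaxOn_inner_gradient [CompleteSpace E] (hh : IsPosHomogeneous h)
    (hc : ConvexOn ℝ univ h) {x g : E} (hx : h x = 1) (hg : HasGradientAt h g x) :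
    IsMaxOn (fun y => ⟪g, y⟫) {y | h y = 1} x := by
  intro y (hy : h y = 1)
  have := hc.add_fderiv_sub_le (hasGradientAt_iff_hasFDerivAt.1 hg) y
  rw [map_sub, InnerProductSpace.toDual_apply_apply, InnerProductSpace.toDual_apply_apply,
    hh.inner_self_of_hasGradientAt hg] at this
  show ⟪g, y⟫ ≤ ⟪g, x⟫
  linarith [hh.inner_self_of_hasGradientAt hg]

theorem isMaxOn_inner_or_neg_of_hasGradientAt_smul [CompleteSpace E]
    (hh : IsPosHomogeneous h) (hc : ConvexOn ℝ univ h) {x σ : E} {c : ℝ} (hx : h x = 1)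
    (hg : HasGradientAt h (c • σ) x) :
    IsMaxOn (fun y => ⟪σ, y⟫) {y | h y = 1} x ∨ IsMaxOn (fun y => ⟪-σ, y⟫) {y | h y = 1} x := by
  have hmax := hh.isMaxOn_inner_gradient hc hx hg
  have hc0 : c ≠ 0 := by
    rintro rfl
    simpa [hx] using hh.inner_self_of_hasGradientAt hg
  rcases hc0.lt_or_gt with hneg | hpos
  · refine Or.inr fun y hy => show ⟪-σ, y⟫ ≤ ⟪-σ, x⟫ from ?_
    have : ⟪c • σ, y⟫ ≤ ⟪c • σ, x⟫ := hmax hy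
    rw [real_inner_smul_left, real_inner_smul_left, mul_le_mul_left_of_neg hneg] at this
    rwa [inner_neg_left, inner_neg_left, neg_le_neg_iff]
  · refine Or.inl fun y hy => show ⟪σ, y⟫ ≤ ⟪σ, x⟫ from ?_
    have : ⟪c • σ, y⟫ ≤ ⟪c • σ, x⟫ := hmax hy
    rwa [real_inner_smul_left, real_inner_smul_left, mul_le_mul_iff_right₀ hpos] at this

theorem exists_gradient_eq_smul_of_isMaxOn [FiniteDimensional ℝ E]
    (hh : IsPosHomogeneous h) (hpos : ∀ v, v ≠ 0 → 0 < h v) {σ x g : E} (hσ : σ ≠ 0)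
    (hx : h x = 1) (hmax : IsMaxOn (fun y => ⟪σ, y⟫) {y | h y = 1} x) (hg : HasGradientAt h g x) :
    ∃ c : ℝ, g = c • σ := by
  have hperp : g ∈ (ℝ ∙ σ)ᗮᗮ := by
    refine (Submodule.mem_orthogonal' _ _).2 fun v hv => ?_
    rw [Submodule.mem_orthogonal_singleton_iff_inner_right] at hv
    exact hh.hasFDerivAt_eq_zero_of_isMaxOn_inner hpos hσ hx hmax hg hv
  rw [Submodule.orthogonal_orthogonal, Submodule.mem_span_singleton] at hperp
  obtain ⟨c, rfl⟩ := hperp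
  exact ⟨c, rfl⟩

theorem exists_pair_eq_setOf_gradient_eq_smul [FiniteDimensional ℝ E]
    (hh : IsPosHomogeneous h) (hcont : Continuous h) (hpos : ∀ v, v ≠ 0 → 0 < h v)
    (hs : StrictConvexOffRays h) (hd : ∀ x, h x = 1 → DifferentiableAt ℝ h x) {σ : E}
    (hσ : σ ≠ 0) :
    ∃ P Q : E, P ≠ Q ∧ {x | h x = 1 ∧ ∃ c : ℝ, gradient h x = c • σ} = {P, Q} := by
  have hσ' : -σ ≠ 0 := neg_ne_zero.2 hσ
  obtain ⟨P, hP, hPmax⟩ := hh.exists_isMaxOn_inner hcont hpos hσ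
  obtain ⟨Q, hQ, hQmax⟩ := hh.exists_isMaxOn_inner hcont hpos hσ'
  have hgrad : ∀ x, h x = 1 → HasGradientAt h (gradient h x) x :=
    fun x hx => (hd x hx).hasGradientAt
  refine ⟨P, Q, fun hPQ => ?_, Set.ext fun x => ⟨?_, ?_⟩⟩
  · have hPσ := hh.inner_pos_of_isMaxOn hpos hσ hPmax
    have hQσ := hh.inner_pos_of_isMaxOn hpos hσ' hQmax
    rw [inner_neg_left, ← hPQ] at hQσ
    linarith
  · rintro ⟨hx, c, hc⟩
    rcases hh.isMaxOn_inner_or_neg_of_hasGradientAt_smul (hh.convexOn_univ hs) hx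
      (hc ▸ hgrad x hx) with hmax | hmax
    · exact Or.inl (hh.eq_of_isMaxOn_inner hpos hs hσ hx hP hmax hPmax)
    · exact Or.inr (hh.eq_of_isMaxOn_inner hpos hs hσ' hx hQ hmax hQmax)
  · rintro (rfl | rfl)
    · exact ⟨hP, hh.exists_gradient_eq_smul_of_isMaxOn hpos hσ hP hPmax (hgrad x hP)⟩
    · obtain ⟨c, hc⟩ := hh.exists_gradient_eq_smul_of_isMaxOn hpos hσ' hQ hQmax (hgrad x hQ)
      exact ⟨hQ, -c, by rw [hc, smul_neg, neg_smul]⟩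

end IsPosHomogeneous

end LevelSet

theorem exists_inner_eq_zero_iff_eq_smul {E : Type*} [NormedAddCommGroup E]
    [InnerProductSpace ℝ E] [Fact (Module.finrank ℝ E = 2)] {η : E} (hη : η ≠ 0) :
    ∃ τ : E, τ ≠ 0 ∧ ∀ g : E, ⟪g, η⟫ = 0 ↔ ∃ c : ℝ, g = c • τ := by
  have := FiniteDimensional.of_fact_finrank_eq_two (K := ℝ) (V := E)
  let o : Orientation ℝ E (Fin 2) := (Module.finBasisOfFinrankEq ℝ E Fact.out).orientation
  refine ⟨o.rightAngleRotation η, by simpa using hη, fun g => ⟨fun hg => ?_, ?_⟩⟩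
  · have hη2 : ‖η‖ ^ 2 ≠ 0 := by positivity
    refine ⟨o.areaForm η g / ‖η‖ ^ 2, ext_inner_right ℝ fun y => ?_⟩
    have := o.inner_mul_inner_add_areaForm_mul_areaForm η g y
    rw [real_inner_comm, hg, zero_mul, zero_add, ← o.inner_rightAngleRotation_left η y] at this
    rw [real_inner_smul_left]
    field_simp
    linarith
  · rintro ⟨c, rfl⟩
    rw [real_inner_smul_left, o.inner_rightAngleRotation_self, mul_zero]

/-- Let `𝔥 : ℝ² → ℝ` be continuous, positively 1-homogeneous, positive
away from `0`, `C¹` on `ℝ² \ {0}`, and strictly convex. Then for every unit vector `η`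
the set of points `P` of the unit sphere `{𝔥 = 1}` at which the outer normal `∇𝔥 P` is
orthogonal to `η` consists of exactly two points. -/
theorem statement_9 (𝔥 : EuclideanSpace ℝ (Fin 2) → ℝ)
    (h_cont : Continuous 𝔥)
    (h_homog : ∀ c : ℝ, 0 ≤ c → ∀ v, 𝔥 (c • v) = c * 𝔥 v)
    (h_pos : ∀ v : EuclideanSpace ℝ (Fin 2), v ≠ 0 → 0 < 𝔥 v)
    (h_C1 : ContDiffOn ℝ 1 𝔥 {(0 : EuclideanSpace ℝ (Fin 2))}ᶜ)
    (h_strict : ∀ t ∈ Set.Ioo (0:ℝ) 1, ∀ ν μ : EuclideanSpace ℝ (Fin 2),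
      ¬ ((∃ l : ℝ, 0 ≤ l ∧ ν = l • μ) ∨ (∃ l : ℝ, 0 ≤ l ∧ μ = l • ν)) →
      𝔥 (t • ν + (1 - t) • μ) < t * 𝔥 ν + (1 - t) * 𝔥 μ)
    (η : EuclideanSpace ℝ (Fin 2)) (hη : ‖η‖ = 1) :
    ∃ P Q : EuclideanSpace ℝ (Fin 2), P ≠ Q ∧
      {x : EuclideanSpace ℝ (Fin 2) | 𝔥 x = 1 ∧ ⟪gradient 𝔥 x, η⟫ = 0} = {P, Q} := by
  have : Fact (Module.finrank ℝ (EuclideanSpace ℝ (Fin 2)) = 2) := ⟨finrank_euclideanSpace_fin⟩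
  have hhom : IsPosHomogeneous 𝔥 := h_homog
  obtain ⟨τ, hτ, horth⟩ := exists_inner_eq_zero_iff_eq_smul (η := η) (by rintro rfl; simp at hη)
  have hd : ∀ x, 𝔥 x = 1 → DifferentiableAt ℝ 𝔥 x := fun x hx =>
    (h_C1.contDiffAt (isOpen_compl_singleton.mem_nhds (hhom.ne_zero_of_eq_one hx))).differentiableAt
      one_ne_zero
  simp_rw [horth]
  exact hhom.exists_pair_eq_setOf_gradient_eq_smul h_cont h_pos h_strict hd hτ
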